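/- arXiv:1611.08990 — 2 statements merged into one kernel-verified Lean document; each statement's English description precedes it below -/
import Mathlib

section
/- Let G be a connected graph of order n ≥ 3 that contains a bridge, and let b be the maximum number of bridges incident with a single vertex of G. Then tpc(G) ≥ b + 1. -/
/-- Interleave two lists, starting with the first. -/
def List.interleaveTPC {α : Type*} : List α → List α → List α
  | [], ys => ys
  | x :: xs, ys => x :: List.interleaveTPC ys xs
termination_by xs ys => xs.length + ys.length

namespace SimpleGraph

variable {V : Type*} {α : Type*} {G : SimpleGraph V}

/-- The sequence of colors `cE e₀, cV v₁, cE e₁, cV v₂, …, cE e_{m-1}` of the edges and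
internal vertices of a walk, in order. -/
def Walk.totalColorSeq (cV : V → α) (cE : Sym2 V → α) {u v : V} (p : G.Walk u v) : List α :=
  (p.edges.map cE).interleaveTPC (p.support.tail.dropLast.map cV)

/-- A walk is total-proper if in its color sequence, any two entries at distance 1 or 2
are distinct.  This says exactly that adjacent edges get distinct colors, adjacent internal
vertices get distinct colors, and every internal vertex gets a color distinct from those of
its incident edges on the walk. -/
def Walk.IsTotalProper (cV : V → α) (cE : Sym2 V → α) {u v : V} (p : G.Walk u v) : Prop :=
  ∀ i a b, (p.totalColorSeq cV cE)[i]? = some a →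
    ((p.totalColorSeq cV cE)[i + 1]? = some b ∨ (p.totalColorSeq cV cE)[i + 2]? = some b) →
    a ≠ b

/-- A total coloring (given by a vertex coloring `cV` and an edge coloring `cE`) makes `G`
total-proper connected if every two distinct vertices are joined by a total-proper path. -/
def IsTPCColoring (G : SimpleGraph V) (cV : V → α) (cE : Sym2 V → α) : Prop :=
  ∀ u v : V, u ≠ v → ∃ p : G.Walk u v, p.IsPath ∧ p.IsTotalProper cV cE

/-- The total-proper connection number: the minimum number of colors in a total coloring
making `G` total-proper connected. -/
noncomputable def tpc (G : SimpleGraph V) : ℕ :=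
  sInf {k | ∃ (cV : V → Fin k) (cE : Sym2 V → Fin k), G.IsTPCColoring cV cE}

end SimpleGraph

/-!
If a vertex `v` carries two bridges `vw₁` and `vw₂`, every `w₁`–`w₂` path crosses both, so it
is `w₁ v w₂`, and total-properness forces the colors of `vw₁`, `vw₂` and `v` to be distinct.
With `b ≥ 2` bridges at `v` this gives `b + 1` distinct colors. For `b = 1`, a third vertex cannot
be adjacent to both ends of a bridge, so some two vertices are non-adjacent; the path joining
them has an internal vertex, whose color differs from that of its first edge. Giving every vertex
and edge its own color shows that the set defining `tpc` is nonempty, so its infimum is not the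
junk value `0`.
-/

namespace List

theorem interleaveTPC_perm {α : Type*} :
    ∀ xs ys : List α, (xs.interleaveTPC ys).Perm (xs ++ ys)
  | [], ys => by simp [interleaveTPC]
  | x :: xs, ys => by
    rw [interleaveTPC, cons_append]
    exact ((interleaveTPC_perm ys xs).trans perm_append_comm).cons x
termination_by xs ys => xs.length + ys.length

end List

namespace SimpleGraph

variable {V α : Type*} {G : SimpleGraph V} {cV : V → α} {cE : Sym2 V → α} {u v w x : V}

namespace Walk

theorem totalColorSeq_cons_nil (h : G.Adj u v) :
    (cons h nil).totalColorSeq cV cE = [cE s(u, v)] := by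
  simp [totalColorSeq, List.interleaveTPC]

theorem totalColorSeq_cons_cons (h : G.Adj u v) (h' : G.Adj v w) (q : G.Walk w x) :
    (cons h (cons h' q)).totalColorSeq cV cE =
      cE s(u, v) :: cV v :: (cons h' q).totalColorSeq cV cE := by
  simp [totalColorSeq, List.interleaveTPC, List.dropLast_cons_of_ne_nil q.support_ne_nil]

theorem exists_totalColorSeq_cons_eq (h : G.Adj u v) (q : G.Walk v w) :
    ∃ l, (cons h q).totalColorSeq cV cE = cE s(u, v) :: l := by
  cases q with
  | nil => exact ⟨[], totalColorSeq_cons_nil h⟩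
  | cons h' q => exact ⟨_, totalColorSeq_cons_cons h h' q⟩

theorem IsTotalProper.cons_cons {h : G.Adj u v} {h' : G.Adj v w} {q : G.Walk w x}
    (hp : (cons h (cons h' q)).IsTotalProper cV cE) :
    cE s(u, v) ≠ cV v ∧ cE s(u, v) ≠ cE s(v, w) ∧ cV v ≠ cE s(v, w) := by
  obtain ⟨l, hl⟩ := exists_totalColorSeq_cons_eq (cV := cV) (cE := cE) h' q
  have hseq := totalColorSeq_cons_cons (cV := cV) (cE := cE) h h' q
  rw [hl] at hseq
  rw [IsTotalProper, hseq] at hp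
  exact ⟨hp 0 _ _ rfl (.inl rfl), hp 0 _ _ rfl (.inr rfl), hp 1 _ _ rfl (.inl rfl)⟩

theorem isTotalProper_of_nodup {p : G.Walk u v} (h : (p.totalColorSeq cV cE).Nodup) :
    p.IsTotalProper cV cE := by
  rintro i a _ hi hj rfl
  have hlt : i < (p.totalColorSeq cV cE).length := (List.getElem?_eq_some_iff.mp hi).1
  rcases hj with hj | hj <;> have := (List.getElem?_inj hlt h).mp (hi.trans hj.symm) <;> omega

theorem IsPath.isTotalProper_of_injective {p : G.Walk u v} (hp : p.IsPath)
    (hc : Function.Injective (Sum.elim cV cE)) : p.IsTotalProper cV cE := by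
  refine isTotalProper_of_nodup ((List.interleaveTPC_perm _ _).nodup_iff.mpr ?_)
  have hinternal : (p.support.tail.dropLast).Nodup :=
    ((List.dropLast_sublist _).trans (List.tail_sublist _)).nodup hp.support_nodup
  have hdisj : ∀ a ∈ p.edges.map Sum.inr, ∀ b ∈ p.support.tail.dropLast.map Sum.inl, a ≠ b := by
    rintro _ ha _ hb rfl
    obtain ⟨_, -, rfl⟩ := List.mem_map.mp ha
    obtain ⟨_, -, h⟩ := List.mem_map.mp hb
    cases h
  have := List.nodup_append.mpr
    ⟨hp.edges_nodup.map Sum.inr_injective, hinternal.map Sum.inl_injective, hdisj⟩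
  simpa [List.map_map] using this.map hc

theorem IsPath.exists_eq_cons_of_mem_edges {p : G.Walk u w} (hp : p.IsPath)
    (he : s(u, x) ∈ p.edges) : ∃ (h : G.Adj u x) (q : G.Walk x w), p = cons h q := by
  cases p with
  | nil => simp at he
  | cons h q =>
    rename_i y
    rw [edges_cons, List.mem_cons] at he
    rcases he with he | he
    · obtain rfl : x = y := Sym2.congr_right.mp he
      exact ⟨h, q, rfl⟩
    · exact absurd (q.fst_mem_support_of_mem_edges he) (cons_isPath_iff h q |>.mp hp).2

end Walk

open Walk

theorem IsTPCColoring.reachable (hc : G.IsTPCColoring cV cE) (u v : V) : G.Reachable u v := by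
  by_cases huv : u = v
  · exact huv ▸ .rfl
  · obtain ⟨p, -⟩ := hc u v huv
    exact ⟨p⟩

theorem IsTPCColoring.nontrivial_of_not_adj (hc : G.IsTPCColoring cV cE) (hne : u ≠ w)
    (hnadj : ¬G.Adj u w) : Nontrivial α := by
  obtain ⟨p, -, hp⟩ := hc u w hne
  match p, hp with
  | .nil, _ => exact absurd rfl hne
  | .cons h .nil, _ => exact absurd h hnadj
  | .cons _ (.cons _ _), hp => exact ⟨_, _, hp.cons_cons.1⟩

theorem IsBridge.not_adj_or_not_adj (he : G.IsBridge s(u, v)) (hwu : w ≠ u) (hwv : w ≠ v) :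
    ¬G.Adj u w ∨ ¬G.Adj w v := by
  by_contra! ⟨huw, hwv'⟩
  refine isBridge_iff.mp he (reachable_deleteEdges_iff_exists_walk.mpr
    ⟨cons huw (cons hwv' nil), ?_⟩)
  simp [hwu.symm, hwv.symm]

theorem IsTPCColoring.nontrivial_of_isBridge [Fintype V] (hV : 2 < Fintype.card V)
    (hc : G.IsTPCColoring cV cE) {e : Sym2 V} (he : G.IsBridge e) : Nontrivial α := by
  classical
  induction e using Sym2.ind with | _ u v => ?_
  obtain ⟨w, -, hw⟩ := Finset.exists_mem_notMem_of_card_lt_card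
    (s := {u, v}) (t := Finset.univ) ((Finset.card_le_two).trans_lt hV)
  simp only [Finset.mem_insert, Finset.mem_singleton, not_or] at hw
  rcases he.not_adj_or_not_adj hw.1 hw.2 with h | h
  · exact hc.nontrivial_of_not_adj (Ne.symm hw.1) h
  · exact hc.nontrivial_of_not_adj hw.2 h

theorem IsTPCColoring.colors_ne_of_isBridge (hc : G.IsTPCColoring cV cE)
    {w₁ w₂ : V} (h₁ : G.IsBridge s(v, w₁)) (h₂ : G.IsBridge s(v, w₂)) (hne : w₁ ≠ w₂) :
    cE s(v, w₁) ≠ cE s(v, w₂) ∧ cV v ≠ cE s(v, w₁) := by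
  obtain ⟨p, hp, htp⟩ := hc w₁ w₂ hne
  have hadj : G.Adj v w₂ := h₂.reachable_iff_adj.mp (hc.reachable v w₂)
  have hmem₁ : s(w₁, v) ∈ p.edges := by
    have := isBridge_iff_forall_walk_mem_edges.mp h₁ (cons hadj p.reverse)
    simpa [hne, hadj.ne, Sym2.eq_swap] using this
  obtain ⟨h, q, rfl⟩ := hp.exists_eq_cons_of_mem_edges hmem₁
  have hmem₂ : s(v, w₂) ∈ q.edges := isBridge_iff_forall_walk_mem_edges.mp h₂ q
  obtain ⟨h', r, rfl⟩ := ((cons_isPath_iff h q).mp hp).1.exists_eq_cons_of_mem_edges hmem₂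
  obtain ⟨hvertex, hedges, -⟩ := htp.cons_cons
  rw [Sym2.eq_swap]
  exact ⟨hedges, hvertex.symm⟩

theorem IsTPCColoring.ncard_bridges_add_one_le [Finite α] (hc : G.IsTPCColoring cV cE)
    (h : 1 < {e : Sym2 V | G.IsBridge e ∧ v ∈ e}.ncard) :
    {e : Sym2 V | G.IsBridge e ∧ v ∈ e}.ncard + 1 ≤ Nat.card α := by
  set B := {e : Sym2 V | G.IsBridge e ∧ v ∈ e}
  have hcolors : ∀ e₁ ∈ B, ∀ e₂ ∈ B, e₁ ≠ e₂ → cE e₁ ≠ cE e₂ ∧ cV v ≠ cE e₁ := by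
    rintro e₁ ⟨h₁, hv₁⟩ e₂ ⟨h₂, hv₂⟩ hne
    obtain ⟨w₁, rfl⟩ := Sym2.mem_iff_exists.mp hv₁
    obtain ⟨w₂, rfl⟩ := Sym2.mem_iff_exists.mp hv₂
    exact hc.colors_ne_of_isBridge h₁ h₂ (by rintro rfl; exact hne rfl)
  have hinj : Set.InjOn cE B := fun e₁ h₁ e₂ h₂ heq ↦
    by_contra fun hne ↦ (hcolors e₁ h₁ e₂ h₂ hne).1 heq
  have hnotMem : cV v ∉ cE '' B := by
    rintro ⟨e, he, heq⟩
    obtain ⟨e', he', hne⟩ := Set.exists_ne_of_one_lt_ncard h e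
    exact (hcolors e he e' he' hne.symm).2 heq.symm
  calc B.ncard + 1 = (insert (cV v) (cE '' B)).ncard := by
        rw [Set.ncard_insert_of_notMem hnotMem, hinj.ncard_image]
    _ ≤ Nat.card α := Set.ncard_le_card _

theorem Connected.exists_isTPCColoring [Fintype V] (hG : G.Connected) :
    ∃ (k : ℕ) (cV : V → Fin k) (cE : Sym2 V → Fin k), G.IsTPCColoring cV cE := by
  classical
  let e := Fintype.equivFin (V ⊕ Sym2 V)
  refine ⟨_, e ∘ Sum.inl, e ∘ Sum.inr, fun u v _ ↦ ?_⟩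
  obtain ⟨p, hp⟩ := (hG.preconnected u v).some.toPath
  exact ⟨p, hp, hp.isTotalProper_of_injective (by rw [Sum.elim_comp_inl_inr]; exact e.injective)⟩

end SimpleGraph

open SimpleGraph in
theorem tpc_ge_bridges_add_one_general {V : Type*} [Fintype V] (n b : ℕ)
    (hn : Fintype.card V = n) (h3 : 3 ≤ n) (G : SimpleGraph V) (hG : G.Connected)
    (hb : ∃ v : V, {e : Sym2 V | G.IsBridge e ∧ v ∈ e}.ncard = b) :
    b + 1 ≤ G.tpc := by
  obtain ⟨k₀, cV₀, cE₀, hc₀⟩ := hG.exists_isTPCColoring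
  refine le_csInf ⟨k₀, cV₀, cE₀, hc₀⟩ ?_
  rintro k ⟨cV, cE, hc⟩
  obtain ⟨v, rfl⟩ := hb
  rcases lt_or_ge 1 {e : Sym2 V | G.IsBridge e ∧ v ∈ e}.ncard with hmany | hfew
  · simpa using hc.ncard_bridges_add_one_le hmany
  obtain hnone | ⟨e, he, -⟩ := {e : Sym2 V | G.IsBridge e ∧ v ∈ e}.eq_empty_or_nonempty
  · rw [hnone, Set.ncard_empty]
    exact Fin.pos (cV v)
  · have := Fin.nontrivial_iff_two_le.mp (hc.nontrivial_of_isBridge (by omega) he)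
    omega

open SimpleGraph in
theorem tpc_ge_bridges_add_one {V : Type*} [Fintype V] (n b : ℕ)
    (hn : Fintype.card V = n) (h3 : 3 ≤ n) (G : SimpleGraph V) (hG : G.Connected)
    (hbr : ∃ e, G.IsBridge e)
    (hb : ∃ v : V, {e : Sym2 V | G.IsBridge e ∧ v ∈ e}.ncard = b)
    (hub : ∀ v : V, {e : Sym2 V | G.IsBridge e ∧ v ∈ e}.ncard ≤ b) :
    b + 1 ≤ G.tpc :=
  tpc_ge_bridges_add_one_general n b hn h3 G hG hb
end

section
/- Let H be a connected graph obtained from the complete bipartite graph K_{s,t} (s ≥ t ≥ 2) by adding one new vertex v joined by at least one edge to K_{s,t}. Then tpc(H) = 3. -/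
/-!
Two vertices in the same part of `K_{s,t}` are not adjacent, so a total-proper path between them
has an edge, an internal vertex and another edge, which carry three distinct colours.

Conversely, exchanging the parts if necessary, let `v` be adjacent to `k` in the first part, and
pick `k' ≠ k` there and `b₀ ≠ b₁` in the second (each part has at least two vertices). Under the
colouring `vertexColor`, `edgeColor` every two vertices are joined by a single edge or by a
total-proper path of length at most four through `k`, `k'`, `b₀`, `b₁`.
-/

namespace List

variable {α : Type*}

def nearbyDistinct [DecidableEq α] : List α → Bool
  | a :: b :: c :: l => a ≠ b && a ≠ c && nearbyDistinct (b :: c :: l)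
  | [a, b] => a ≠ b
  | _ => true

theorem ne_of_nearbyDistinct [DecidableEq α] :
    ∀ {l : List α}, l.nearbyDistinct → ∀ i a b, l[i]? = some a →
      (l[i + 1]? = some b ∨ l[i + 2]? = some b) → a ≠ b
  | a :: b :: c :: l, h, 0, _, _, ha, hb => by
    simp only [nearbyDistinct, Bool.and_eq_true, decide_eq_true_eq] at h
    simp at ha hb
    rcases hb with rfl | rfl <;> rw [← ha] <;> tauto
  | _ :: b :: c :: l, h, i + 1, _, _, ha, hb => by
    simp only [nearbyDistinct, Bool.and_eq_true] at h
    exact ne_of_nearbyDistinct (l := b :: c :: l) h.2 i _ _ ha hb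
  | [a, b], h, i, _, _, ha, hb => by
    match i with
    | 0 => simp [nearbyDistinct] at h ha hb; rw [← ha, ← hb]; exact h
    | i + 1 => simp at hb
  | [_], _, i, _, _, _, hb => by simp at hb
  | [], _, i, _, _, ha, _ => by simp at ha

end List

namespace SimpleGraph

variable {V W α : Type*} {G : SimpleGraph V} {G' : SimpleGraph W}
  {cV : V → α} {cE : Sym2 V → α}

def HasTotalProperPath (G : SimpleGraph V) (cV : V → α) (cE : Sym2 V → α) (u v : V) : Prop :=
  ∃ p : G.Walk u v, p.IsPath ∧ p.IsTotalProper cV cE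

theorem Walk.IsTotalProper.of_nearbyDistinct [DecidableEq α] {u v : V} {p : G.Walk u v}
    (h : (p.totalColorSeq cV cE).nearbyDistinct) : p.IsTotalProper cV cE :=
  List.ne_of_nearbyDistinct h

theorem Walk.hasTotalProperPath [DecidableEq α] {u v : V} (p : G.Walk u v) (hp : p.IsPath)
    (hc : (p.totalColorSeq cV cE).nearbyDistinct) : G.HasTotalProperPath cV cE u v :=
  ⟨p, hp, .of_nearbyDistinct hc⟩

theorem hasTotalProperPath_of_adj {u v : V} (h : G.Adj u v) :
    G.HasTotalProperPath cV cE u v :=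
  ⟨.cons h .nil, by simp [h.ne], fun _ _ _ _ hb => by
    simp [Walk.totalColorSeq, List.interleaveTPC] at hb⟩

theorem Walk.exists_totalColorSeq_cons_cons {u v w x : V} (huv : G.Adj u v) (hvw : G.Adj v w)
    (p : G.Walk w x) : ∃ l, (cons huv (cons hvw p)).totalColorSeq cV cE =
      cE s(u, v) :: cV v :: cE s(v, w) :: l := by
  cases p <;> simp [totalColorSeq, List.interleaveTPC]

theorem IsTPCColoring.three_le_card [Fintype α] (h : G.IsTPCColoring cV cE) {u v : V}
    (huv : u ≠ v) (hadj : ¬ G.Adj u v) : 3 ≤ Fintype.card α := by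
  classical
  obtain ⟨p, -, hp⟩ := h u v huv
  obtain _ | ⟨huw, _ | ⟨hwx, q⟩⟩ := p
  · exact absurd rfl huv
  · exact absurd huw hadj
  obtain ⟨l, hl⟩ := Walk.exists_totalColorSeq_cons_cons (cV := cV) (cE := cE) huw hwx q
  rw [Walk.IsTotalProper, hl] at hp
  have h01 := hp 0 _ _ rfl (.inl rfl)
  have h02 := hp 0 _ _ rfl (.inr rfl)
  have h12 := hp 1 _ _ rfl (.inl rfl)
  exact (Finset.card_eq_three.2 ⟨_, _, _, h01, h02, h12, rfl⟩).ge.trans (Finset.card_le_univ _)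

theorem IsTPCColoring.comap_iso {cV : W → α} {cE : Sym2 W → α} (φ : G ≃g G')
    (h : G'.IsTPCColoring cV cE) : G.IsTPCColoring (cV ∘ φ) (cE ∘ Sym2.map φ) := by
  intro u v huv
  obtain ⟨q, hq, hqc⟩ := h (φ u) (φ v) (φ.injective.ne huv)
  let p : G.Walk u v :=
    (q.map φ.symm.toHom).copy (φ.symm_apply_apply u) (φ.symm_apply_apply v)
  have hseq : p.totalColorSeq (cV ∘ φ) (cE ∘ Sym2.map φ) = q.totalColorSeq cV cE := by
    simp [p, Walk.totalColorSeq, Walk.edges_map, Walk.support_map, List.map_tail,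
      List.map_dropLast, Function.comp_def, Sym2.map_map]
  refine ⟨p, by simpa [p] using hq.map φ.symm.injective, ?_⟩
  rw [Walk.IsTotalProper, hseq]
  exact hqc

theorem IsTPCColoring.tpc_eq_three {cV : V → Fin 3} {cE : Sym2 V → Fin 3}
    (h : G.IsTPCColoring cV cE) {u v : V} (huv : u ≠ v) (hadj : ¬ G.Adj u v) : G.tpc = 3 :=
  le_antisymm (Nat.sInf_le ⟨cV, cE, h⟩) <| le_csInf ⟨3, cV, cE, h⟩ fun _ ⟨_, _, h'⟩ => by
    simpa using IsTPCColoring.three_le_card h' huv hadj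

def IsCompleteBipartiteAddVertex {α β : Type*} (G : SimpleGraph (Option (α ⊕ β))) : Prop :=
  ∀ a b, G.Adj (some a) (some b) ↔ (completeBipartiteGraph α β).Adj a b

end SimpleGraph

namespace CompleteBipartiteAddVertex

open SimpleGraph

variable {α β : Type*} {G : SimpleGraph (Option (α ⊕ β))}

theorem adj_inl_inr (hG : G.IsCompleteBipartiteAddVertex) (a : α) (b : β) :
    G.Adj (some (.inl a)) (some (.inr b)) :=
  (hG _ _).2 (by simp)

section

variable [DecidableEq α] [DecidableEq β]

def vertexColor (k' : α) (b₀ b₁ : β) : Option (α ⊕ β) → Fin 3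
  | none => 0
  | some (.inl a) => if a = k' then 1 else 0
  | some (.inr b) => if b = b₀ then 2 else if b = b₁ then 1 else 0

def edgeColor (k k' : α) (b₀ : β) (e : Sym2 (Option (α ⊕ β))) : Fin 3 :=
  if none ∈ e then 2
  else if some (.inl k) ∈ e then (if some (.inr b₀) ∈ e then 1 else 2)
  else if some (.inl k') ∈ e then (if some (.inr b₀) ∈ e then 0 else 2)
  else 0

attribute [local simp] Walk.isPath_def Walk.totalColorSeq List.interleaveTPC
attribute [local simp] edgeColor vertexColor

variable {k k' : α} {b₀ b₁ : β}

theorem hasTotalProperPath_none_inl (hG : G.IsCompleteBipartiteAddVertex) (hk : k' ≠ k)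
    (hv : G.Adj none (some (.inl k))) (i : α) :
    G.HasTotalProperPath (vertexColor k' b₀ b₁) (edgeColor k k' b₀) none (some (.inl i)) := by
  by_cases hi : i = k
  · subst hi
    exact hasTotalProperPath_of_adj hv
  · refine Walk.hasTotalProperPath
      (.cons hv (.cons (adj_inl_inr hG k b₀) (.cons (adj_inl_inr hG i b₀).symm .nil))) ?_ ?_ <;>
    simp +decide [Ne.symm hi, Ne.symm hk]

theorem hasTotalProperPath_none_inr (hG : G.IsCompleteBipartiteAddVertex) (hk : k' ≠ k)
    (hv : G.Adj none (some (.inl k))) (j : β) :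
    G.HasTotalProperPath (vertexColor k' b₀ b₁) (edgeColor k k' b₀) none (some (.inr j)) := by
  by_cases hj : j = b₀
  · subst hj
    refine Walk.hasTotalProperPath (.cons hv (.cons (adj_inl_inr hG k j) .nil)) ?_ ?_ <;>
    simp +decide [Ne.symm hk]
  · refine Walk.hasTotalProperPath (.cons hv (.cons (adj_inl_inr hG k b₀)
      (.cons (adj_inl_inr hG k' b₀).symm (.cons (adj_inl_inr hG k' j) .nil)))) ?_ ?_ <;>
    simp +decide [Ne.symm hj, Ne.symm hk]

theorem hasTotalProperPath_inl_none (hG : G.IsCompleteBipartiteAddVertex) (hk : k' ≠ k)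
    (hv : G.Adj none (some (.inl k))) (i : α) :
    G.HasTotalProperPath (vertexColor k' b₀ b₁) (edgeColor k k' b₀) (some (.inl i)) none := by
  by_cases hi : i = k
  · subst hi
    exact hasTotalProperPath_of_adj hv.symm
  · refine Walk.hasTotalProperPath (.cons (adj_inl_inr hG i b₀)
      (.cons (adj_inl_inr hG k b₀).symm (.cons hv.symm .nil))) ?_ ?_ <;>
    simp +decide [hi, Ne.symm hi, Ne.symm hk]

theorem hasTotalProperPath_inr_none (hG : G.IsCompleteBipartiteAddVertex) (hk : k' ≠ k)
    (hv : G.Adj none (some (.inl k))) (j : β) :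
    G.HasTotalProperPath (vertexColor k' b₀ b₁) (edgeColor k k' b₀) (some (.inr j)) none := by
  by_cases hj : j = b₀
  · subst hj
    refine Walk.hasTotalProperPath (.cons (adj_inl_inr hG k j).symm (.cons hv.symm .nil)) ?_ ?_ <;>
    simp +decide [Ne.symm hk]
  · refine Walk.hasTotalProperPath (.cons (adj_inl_inr hG k' j).symm (.cons (adj_inl_inr hG k' b₀)
      (.cons (adj_inl_inr hG k b₀).symm (.cons hv.symm .nil)))) ?_ ?_ <;>
    simp +decide [hj, Ne.symm hj, hk, Ne.symm hk]

theorem hasTotalProperPath_inl_inl (hG : G.IsCompleteBipartiteAddVertex) (hk : k' ≠ k)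
    (hb : b₀ ≠ b₁) {i i' : α} (hii' : i ≠ i') :
    G.HasTotalProperPath (vertexColor k' b₀ b₁) (edgeColor k k' b₀)
      (some (.inl i)) (some (.inl i')) := by
  by_cases hK : i = k ∨ i' = k
  · refine Walk.hasTotalProperPath
      (.cons (adj_inl_inr hG i b₀) (.cons (adj_inl_inr hG i' b₀).symm .nil)) ?_ ?_ <;>
    rcases hK with rfl | rfl <;> simp +decide [hii', Ne.symm hii']
  obtain ⟨hik, hi'k⟩ : i ≠ k ∧ i' ≠ k := not_or.1 hK
  by_cases hK' : i = k' ∨ i' = k'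
  · refine Walk.hasTotalProperPath
      (.cons (adj_inl_inr hG i b₁) (.cons (adj_inl_inr hG i' b₁).symm .nil)) ?_ ?_ <;>
    rcases hK' with rfl | rfl <;>
    simp +decide [hii', Ne.symm hii', Ne.symm hik, Ne.symm hi'k, hb, Ne.symm hb]
  obtain ⟨hik', hi'k'⟩ : i ≠ k' ∧ i' ≠ k' := not_or.1 hK'
  refine Walk.hasTotalProperPath (.cons (adj_inl_inr hG i b₀) (.cons (adj_inl_inr hG k b₀).symm
    (.cons (adj_inl_inr hG k b₁) (.cons (adj_inl_inr hG i' b₁).symm .nil)))) ?_ ?_ <;>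
  simp +decide [hii', hik, Ne.symm hik, Ne.symm hi'k, Ne.symm hik', Ne.symm hi'k', Ne.symm hk, hb,
    Ne.symm hb]

theorem hasTotalProperPath_inr_inr (hG : G.IsCompleteBipartiteAddVertex) (hk : k' ≠ k)
    {j j' : β} (hjj' : j ≠ j') :
    G.HasTotalProperPath (vertexColor k' b₀ b₁) (edgeColor k k' b₀)
      (some (.inr j)) (some (.inr j')) := by
  by_cases hB : j = b₀ ∨ j' = b₀
  · refine Walk.hasTotalProperPath
      (.cons (adj_inl_inr hG k' j).symm (.cons (adj_inl_inr hG k' j') .nil)) ?_ ?_ <;>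
    rcases hB with rfl | rfl <;> simp +decide [hjj', Ne.symm hjj', Ne.symm hk]
  obtain ⟨hjb, hj'b⟩ : j ≠ b₀ ∧ j' ≠ b₀ := not_or.1 hB
  refine Walk.hasTotalProperPath (.cons (adj_inl_inr hG k' j).symm (.cons (adj_inl_inr hG k' b₀)
    (.cons (adj_inl_inr hG k b₀).symm (.cons (adj_inl_inr hG k j') .nil)))) ?_ ?_ <;>
  simp +decide [hjj', hjb, Ne.symm hjb, Ne.symm hj'b, hk, Ne.symm hk]

theorem isTPCColoring (hG : G.IsCompleteBipartiteAddVertex) (hk : k' ≠ k)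
    (hb : b₀ ≠ b₁) (hv : G.Adj none (some (.inl k))) :
    G.IsTPCColoring (vertexColor k' b₀ b₁) (edgeColor k k' b₀) := by
  rintro (_ | i | j) (_ | i' | j') huv
  · exact absurd rfl huv
  · exact hasTotalProperPath_none_inl hG hk hv i'
  · exact hasTotalProperPath_none_inr hG hk hv j'
  · exact hasTotalProperPath_inl_none hG hk hv i
  · exact hasTotalProperPath_inl_inl hG hk hb (by simpa using huv)
  · exact hasTotalProperPath_of_adj (adj_inl_inr hG i j')
  · exact hasTotalProperPath_inr_none hG hk hv j
  · exact hasTotalProperPath_of_adj (adj_inl_inr hG i' j).symm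
  · exact hasTotalProperPath_inr_inr hG hk (by simpa using huv)

end

theorem exists_isTPCColoring_fin_three_of_adj_none [Nontrivial α] [Nontrivial β]
    (hG : G.IsCompleteBipartiteAddVertex)
    {x : α ⊕ β} (hv : G.Adj none (some x)) :
    ∃ (cV : Option (α ⊕ β) → Fin 3) (cE : Sym2 (Option (α ⊕ β)) → Fin 3),
      G.IsTPCColoring cV cE := by
  classical
  rcases x with k | j
  · obtain ⟨k', hk⟩ := exists_ne k
    obtain ⟨b₀, b₁, hb⟩ := exists_pair_ne β
    exact ⟨_, _, isTPCColoring hG hk hb hv⟩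
  · obtain ⟨j', hj⟩ := exists_ne j
    obtain ⟨a₀, a₁, ha⟩ := exists_pair_ne α
    let e : Option (β ⊕ α) ≃ Option (α ⊕ β) := Equiv.optionCongr (Equiv.sumComm β α)
    have hG' : (G.comap e).IsCompleteBipartiteAddVertex := by
      rintro (a | a) (b | b) <;> simp [e, hG _ _]
    have hv' : (G.comap e).Adj none (some (.inl j)) := hv
    exact ⟨_, _, (isTPCColoring hG' hj ha hv').comap_iso (Iso.comap e G).symm⟩

end CompleteBipartiteAddVertex

open SimpleGraph in
theorem tpc_completeBipartite_add_vertex (s t : ℕ) (hts : t ≤ s) (ht : 2 ≤ t)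
    (H : SimpleGraph (Option (Fin s ⊕ Fin t)))
    (hind : ∀ a b : Fin s ⊕ Fin t,
      H.Adj (some a) (some b) ↔ (completeBipartiteGraph (Fin s) (Fin t)).Adj a b)
    (hconn : H.Connected) : H.tpc = 3 := by
  have : Nontrivial (Fin s) := Fin.nontrivial_iff_two_le.2 (ht.trans hts)
  have : Nontrivial (Fin t) := Fin.nontrivial_iff_two_le.2 ht
  obtain ⟨_ | x, hx⟩ := hconn.preconnected.exists_adj_of_nontrivial none
  · exact absurd hx H.irrefl
  obtain ⟨cV, cE, hc⟩ :=
    CompleteBipartiteAddVertex.exists_isTPCColoring_fin_three_of_adj_none hind hx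
  obtain ⟨a, a', ha⟩ := exists_pair_ne (Fin s)
  exact hc.tpc_eq_three (u := some (.inl a)) (v := some (.inl a')) (by simpa using ha)
    (by simp [hind])
end
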